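/- arXiv:2306.12204 — 2 statements merged into one kernel-verified Lean document; each statement's English description precedes it below -/
import Mathlib

section
/- Let U ⊆ ℂ² be a bounded open set and let (W_n) be a sequence of open subsets of U with 0 ∈ W_n for all n, and let W = ker((W_n)) be the kernel of the sequence. Then for every p = (p₁, p₂) ∈ W, liminf_{n→∞} η_{W_n}(p) ≥ η_W(p). (This is Proposition 1.5 of the paper for the nonsingular horizontal foliation of ℂ² restricted to U.) -/
open Filter Metric Topology Set

/-- The kernel of a sequence of open sets: the union over `n` of the connected
component containing `0` of the interior of `⋂ k ≥ n, W k`. -/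
def seqKernel {X : Type*} [TopologicalSpace X] [Zero X] (W : ℕ → Set X) : Set X :=
  ⋃ n, connectedComponentIn (interior (⋂ k, ⋂ (_ : n ≤ k), W k)) 0

/-- The modulus-of-uniformization function (Euclidean metric) of the restriction
to `V ⊆ ℂ²` of the horizontal foliation of `ℂ²`: the supremum of `|g'(0)|` over
holomorphic maps `g : 𝔻 → ℂ` with `g 0 = p₁` and `(g z, p₂) ∈ V` for `z ∈ 𝔻`
(with `sSup ∅ = 0`). -/
noncomputable def eta2 (V : Set (ℂ × ℂ)) (p : ℂ × ℂ) : ℝ :=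
  sSup {r : ℝ | ∃ g : ℂ → ℂ, DifferentiableOn ℂ g (ball (0 : ℂ) 1) ∧ g 0 = p.1 ∧
    (∀ z ∈ ball (0 : ℂ) 1, (g z, p.2) ∈ V) ∧ r = ‖deriv g 0‖}

/-! The kernel is the increasing union of the open sets `kernelStage W n`, each contained in
every `W k` with `k ≥ n`, so a compact subset of the kernel lies in `W k` for all large `k`.
Hence a holomorphic leaf disc `g` in the kernel, shrunk to `z ↦ g (ρ z)` with `ρ < 1`, is a
leaf disc in `W k` for all large `k`, which gives `ρ ‖g' 0‖ ≤ liminf η_{W k}(p)`; let `ρ → 1`. -/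

namespace Real

lemma le_of_forall_lt_one_mul_le {a b : ℝ} (h : ∀ ρ ∈ Ioo (0 : ℝ) 1, ρ * a ≤ b) : a ≤ b := by
  have hlim : Tendsto (· * a) (𝓝[<] 1) (𝓝 a) := by
    simpa using ((continuous_mul_const a).tendsto 1).mono_left nhdsWithin_le_nhds
  exact le_of_tendsto hlim (mem_of_superset (Ioo_mem_nhdsLT one_pos) h)

end Real

section Kernel

variable {X : Type*} [TopologicalSpace X] [Zero X] (W : ℕ → Set X)

def kernelStage (n : ℕ) : Set X :=
  connectedComponentIn (interior (⋂ k, ⋂ (_ : n ≤ k), W k)) 0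

lemma seqKernel_eq_iUnion_kernelStage : seqKernel W = ⋃ n, kernelStage W n := rfl

variable {W}

lemma kernelStage_subset {n k : ℕ} (hnk : n ≤ k) : kernelStage W n ⊆ W k :=
  (connectedComponentIn_subset _ _).trans <| interior_subset.trans <| iInter₂_subset k hnk

lemma monotone_kernelStage : Monotone (kernelStage W) := fun _ _ hnm =>
  connectedComponentIn_mono _ <| interior_mono <|
    iInter₂_mono' fun k hk => ⟨k, hnm.trans hk, subset_rfl⟩

lemma isOpen_kernelStage [LocallyConnectedSpace X] (n : ℕ) : IsOpen (kernelStage W n) :=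
  isOpen_interior.connectedComponentIn

lemma IsCompact.eventually_subset_of_subset_seqKernel [LocallyConnectedSpace X] {K : Set X}
    (hK : IsCompact K) (hKW : K ⊆ seqKernel W) : ∀ᶠ k in atTop, K ⊆ W k := by
  obtain ⟨N, hN⟩ := hK.elim_directed_cover _ isOpen_kernelStage
    (hKW.trans (seqKernel_eq_iUnion_kernelStage W).subset) monotone_kernelStage.directed_le
  filter_upwards [eventually_ge_atTop N] with k hk using hN.trans (kernelStage_subset hk)

end Kernel

def IsLeafDisc (V : Set (ℂ × ℂ)) (p : ℂ × ℂ) (g : ℂ → ℂ) : Prop :=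
  DifferentiableOn ℂ g (ball 0 1) ∧ g 0 = p.1 ∧ ∀ z ∈ ball (0 : ℂ) 1, (g z, p.2) ∈ V

lemma eta2_nonneg (V : Set (ℂ × ℂ)) (p : ℂ × ℂ) : 0 ≤ eta2 V p :=
  Real.sSup_nonneg <| by rintro _ ⟨g, -, -, -, rfl⟩; exact norm_nonneg _

lemma eta2_le {V : Set (ℂ × ℂ)} {p : ℂ × ℂ} {a : ℝ} (ha : 0 ≤ a)
    (h : ∀ g, IsLeafDisc V p g → ‖deriv g 0‖ ≤ a) : eta2 V p ≤ a :=
  Real.sSup_le (by rintro _ ⟨g, hg, hg0, hgV, rfl⟩; exact h g ⟨hg, hg0, hgV⟩) ha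

namespace IsLeafDisc

variable {V V' : Set (ℂ × ℂ)} {p : ℂ × ℂ} {g : ℂ → ℂ}

lemma norm_deriv_le (hg : IsLeafDisc V p g) {R : ℝ} (hV : V ⊆ closedBall 0 R) :
    ‖deriv g 0‖ ≤ 2 * R := by
  obtain ⟨hdiff, -, hgV⟩ := hg
  have hgR : ∀ z ∈ ball (0 : ℂ) 1, ‖g z‖ ≤ R := fun z hz =>
    (norm_fst_le _).trans (mem_closedBall_zero_iff.mp (hV (hgV z hz)))
  have hmaps : MapsTo g (ball 0 1) (closedBall (g 0) (2 * R)) := fun z hz => by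
    rw [mem_closedBall, dist_eq_norm]
    linarith [norm_sub_le (g z) (g 0), hgR z hz, hgR 0 (mem_ball_self one_pos)]
  simpa using Complex.norm_deriv_le_div_of_mapsTo_ball hdiff hmaps one_pos

lemma norm_deriv_le_eta2 (hg : IsLeafDisc V p g) (hV : Bornology.IsBounded V) :
    ‖deriv g 0‖ ≤ eta2 V p := by
  obtain ⟨R, hR⟩ := hV.subset_closedBall 0
  refine le_csSup ⟨2 * R, ?_⟩ ⟨g, hg.1, hg.2.1, hg.2.2, rfl⟩
  rintro _ ⟨f, hf, hf0, hfV, rfl⟩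
  exact norm_deriv_le ⟨hf, hf0, hfV⟩ hR

lemma comp_mul (hg : IsLeafDisc V p g) {ρ : ℂ} (hρ : ‖ρ‖ < 1)
    (hV' : ∀ w ∈ closedBall (0 : ℂ) ‖ρ‖, (g w, p.2) ∈ V') :
    IsLeafDisc V' p (fun z => g (ρ * z)) := by
  have hmul : ∀ z ∈ ball (0 : ℂ) 1, ρ * z ∈ closedBall 0 ‖ρ‖ := fun z hz => by
    rw [mem_closedBall_zero_iff, norm_mul]
    exact mul_le_of_le_one_right (norm_nonneg ρ) (mem_ball_zero_iff.mp hz).le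
  refine ⟨hg.1.comp (differentiableOn_const ρ |>.mul differentiableOn_id) fun z hz => ?_,
    by simpa using hg.2.1, fun z hz => hV' _ (hmul z hz)⟩
  exact closedBall_subset_ball hρ (hmul z hz)

lemma deriv_comp_mul (ρ : ℂ) : deriv (fun z => g (ρ * z)) 0 = ρ * deriv g 0 := by
  simp [deriv_comp_mul_left]

lemma eventually_mul_norm_deriv_le_eta2 {W : ℕ → Set (ℂ × ℂ)}
    (hg : IsLeafDisc (seqKernel W) p g) (hW : ∀ k, Bornology.IsBounded (W k)) {ρ : ℝ}
    (hρ : ρ ∈ Ioo (0 : ℝ) 1) : ∀ᶠ k in atTop, ρ * ‖deriv g 0‖ ≤ eta2 (W k) p := by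
  have hρ' : ‖(ρ : ℂ)‖ = ρ := by simp [abs_of_pos hρ.1]
  have hdisc : closedBall (0 : ℂ) ρ ⊆ ball 0 1 := closedBall_subset_ball hρ.2
  have hK : IsCompact ((fun w => (g w, p.2)) '' closedBall 0 ρ) :=
    (isCompact_closedBall _ _).image_of_continuousOn
      ((hg.1.continuousOn.mono hdisc).prodMk continuousOn_const)
  filter_upwards [hK.eventually_subset_of_subset_seqKernel
    (image_subset_iff.mpr fun w hw => hg.2.2 w (hdisc hw))] with k hk
  have hgk := hg.comp_mul (V' := W k) (hρ'.trans_lt hρ.2) fun w hw =>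
    hk (mem_image_of_mem _ (hρ' ▸ hw))
  simpa [deriv_comp_mul, abs_of_pos hρ.1] using hgk.norm_deriv_le_eta2 (hW k)

end IsLeafDisc

theorem eta2_kernel_le_liminf_general (U : Set (ℂ × ℂ))
    (hUbdd : Bornology.IsBounded U)
    (W : ℕ → Set (ℂ × ℂ)) (hWU : ∀ n, W n ⊆ U) :
    ∀ p ∈ seqKernel W, eta2 (seqKernel W) p ≤ liminf (fun n => eta2 (W n) p) atTop := by
  intro p _
  obtain ⟨R, hR, hUR⟩ := hUbdd.subset_closedBall_lt 0 0
  have hWbdd : ∀ n, Bornology.IsBounded (W n) := fun n => hUbdd.subset (hWU n)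
  have hcob : IsCoboundedUnder (· ≥ ·) atTop fun n => eta2 (W n) p :=
    isCoboundedUnder_ge_of_le atTop fun n =>
      eta2_le (by positivity) fun g hg => hg.norm_deriv_le ((hWU n).trans hUR)
  refine eta2_le (le_liminf_of_le hcob (.of_forall fun n => eta2_nonneg _ _)) fun g hg => ?_
  exact Real.le_of_forall_lt_one_mul_le fun ρ hρ =>
    le_liminf_of_le hcob (hg.eventually_mul_norm_deriv_le_eta2 hWbdd hρ)

/-- Proposition 1.5 for the horizontal foliation of `ℂ²` restricted to a bounded
open set `U`: if `W₀` is the kernel of the sequence `(W n)` of open subsets of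
`U`, then `liminf η_{W n} p ≥ η_{W₀} p` for all `p ∈ W₀`. -/
theorem eta2_kernel_le_liminf (U : Set (ℂ × ℂ)) (hUopen : IsOpen U)
    (hUbdd : Bornology.IsBounded U)
    (W : ℕ → Set (ℂ × ℂ)) (hWopen : ∀ n, IsOpen (W n)) (hWU : ∀ n, W n ⊆ U)
    (h0 : ∀ n, (0 : ℂ × ℂ) ∈ W n) :
    ∀ p ∈ seqKernel W, eta2 (seqKernel W) p ≤ liminf (fun n => eta2 (W n) p) atTop :=
  eta2_kernel_le_liminf_general U hUbdd W hWU
end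

section
/- Let U ⊆ ℂ be a bounded connected open set, and let W_n, W ⊆ U be connected open sets with 0 ∈ W_n for all n and 0 ∈ W. Assume (W_n) converges to W in the kernel sense, the set F associated to (W_n) and W is empty, and the function p ↦ η_W(p) is continuous on W. Then η_{W_n} → η_W uniformly on every compact subset of W. (This is Theorem 1.6 of the paper for the trivial single-leaf nonsingular foliation of U, for which the singular set E and the defective set S are empty; bounded plane domains are automatically taut.) -/
open Filter Metric Topology Set

/-- The set `F` associated to a sequence `(W n)` and a limit set `W₀`: points
outside `closure W₀` that are limits of points `p k ∈ W (n k) \ closure W₀`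
along a strictly increasing sequence of indices. -/
def Fset {X : Type*} [TopologicalSpace X] (W : ℕ → Set X) (W₀ : Set X) : Set X :=
  {p | p ∉ closure W₀ ∧ ∃ nk : ℕ → ℕ, StrictMono nk ∧ ∃ pk : ℕ → X,
    (∀ k, pk k ∈ W (nk k) \ closure W₀) ∧ Tendsto pk atTop (nhds p)}

/-- The modulus-of-uniformization function of a plane domain `Ω` (for the trivial
single-leaf foliation): the supremum of `|f'(0)|` over holomorphic maps
`f : 𝔻 → Ω` with `f 0 = p` (with `sSup ∅ = 0`). -/
noncomputable def eta (Ω : Set ℂ) (p : ℂ) : ℝ :=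
  sSup {r : ℝ | ∃ f : ℂ → ℂ, DifferentiableOn ℂ f (ball (0 : ℂ) 1) ∧ f 0 = p ∧
    (∀ z ∈ ball (0 : ℂ) 1, f z ∈ Ω) ∧ r = ‖deriv f 0‖}

/-!
Lower bound: a competitor `f` for `η_{W₀}(p)`, restricted to a slightly smaller disc and
translated by `q - p`, has compact image inside the kernel, hence inside `W n` for all large `n`
and all `q` near `p`; so `η_{W n}(q)` is eventually almost `η_{W₀}(p)`.

Upper bound: if `η_{W n}(q) ≥ c > η_{W₀}(p)` along `n → ∞`, `q → p`, Montel's theorem gives a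
locally uniform limit `F` of competitors with `F 0 = p` and `|F'(0)| > η_{W₀}(p)`. By
Hurwitz's theorem every point of `F(𝔻)` has a neighbourhood eventually inside the `W n`, and a
connectedness argument puts `F(𝔻)` inside the kernel of that subsequence, which is `W₀`; so `F`
competes for `η_{W₀}(p)`, a contradiction.

With continuity of `η_{W₀}` both bounds give locally uniform convergence on `W₀`, hence uniform
convergence on compact subsets.
-/

section Kernel

variable {X : Type*} [TopologicalSpace X] {W : ℕ → Set X} {C : Set X} {m n : ℕ}

def tailInterior (W : ℕ → Set X) (n : ℕ) : Set X :=
  interior (⋂ k, ⋂ (_ : n ≤ k), W k)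

theorem tailInterior_mono : Monotone (tailInterior W) := fun _ _ hmn =>
  interior_mono fun _ hx => mem_iInter₂.2 fun k hk => mem_iInter₂.1 hx k (hmn.trans hk)

theorem tailInterior_subset (h : n ≤ m) : tailInterior W n ⊆ W m :=
  interior_subset.trans (iInter₂_subset m h)

theorem exists_mem_tailInterior {x : X} {s : Set X} (hs : s ∈ 𝓝 x)
    (h : ∀ᶠ k in atTop, s ⊆ W k) : ∃ n, x ∈ tailInterior W n := by
  obtain ⟨n, hn⟩ := eventually_atTop.1 h
  exact ⟨n, mem_interior_iff_mem_nhds.2 (mem_of_superset hs (subset_iInter₂ hn))⟩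

theorem IsCompact.exists_subset_tailInterior (hC : IsCompact C)
    (h : ∀ x ∈ C, ∃ n, x ∈ tailInterior W n) : ∃ n, C ⊆ tailInterior W n :=
  hC.elim_directed_cover _ (fun _ => isOpen_interior) (fun x hx => mem_iUnion.2 (h x hx))
    tailInterior_mono.directed_le

variable [Zero X]

theorem isOpen_seqKernel [LocallyConnectedSpace X] : IsOpen (seqKernel W) :=
  isOpen_iUnion fun _ => isOpen_interior.connectedComponentIn

theorem exists_mem_tailInterior_of_mem_seqKernel {x : X} (hx : x ∈ seqKernel W) :
    ∃ n, x ∈ tailInterior W n := by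
  obtain ⟨n, hn⟩ := mem_iUnion.1 hx
  exact ⟨n, connectedComponentIn_subset _ _ hn⟩

theorem IsCompact.eventually_subset_of_subset_seqKernel_s10 (hC : IsCompact C)
    (h : C ⊆ seqKernel W) : ∀ᶠ n in atTop, C ⊆ W n := by
  obtain ⟨N, hN⟩ := hC.exists_subset_tailInterior fun x hx =>
    exists_mem_tailInterior_of_mem_seqKernel (h hx)
  exact eventually_atTop.2 ⟨N, fun n hn => hN.trans (tailInterior_subset hn)⟩

theorem subset_seqKernel_of_isPreconnected (hC : IsPreconnected C) {p : X} (hpC : p ∈ C)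
    (hp : p ∈ seqKernel W) (hCn : C ⊆ tailInterior W n) : C ⊆ seqKernel W := by
  obtain ⟨m, hm⟩ := mem_iUnion.1 hp
  set V := connectedComponentIn (tailInterior W (max n m)) 0
  have hpV : p ∈ V := connectedComponentIn_mono _ (tailInterior_mono (le_max_right n m)) hm
  have h0 : (0 : X) ∈ tailInterior W (max n m) := connectedComponentIn_nonempty_iff.1 ⟨p, hpV⟩
  have hCV : C ∪ V ⊆ V :=
    (hC.union p hpC hpV isPreconnected_connectedComponentIn).subset_connectedComponentIn
      (Or.inr (mem_connectedComponentIn h0))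
      (union_subset (hCn.trans (tailInterior_mono (le_max_left n m)))
        (connectedComponentIn_subset _ _))
  exact subset_union_left.trans (hCV.trans (subset_iUnion_of_subset (max n m) subset_rfl))

end Kernel

theorem exists_seq_of_frequently_atTop_prod_nhds {X : Type*} [TopologicalSpace X]
    [FirstCountableTopology X] {p : X} {P : ℕ → X → Prop}
    (h : ∃ᶠ x in atTop ×ˢ 𝓝 p, P x.1 x.2) :
    ∃ n : ℕ → ℕ, StrictMono n ∧ ∃ q : ℕ → X, Tendsto q atTop (𝓝 p) ∧ ∀ j, P (n j) (q j) := by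
  obtain ⟨x, hx, hP⟩ := frequently_iff_seq_forall.1 h
  rw [tendsto_prod_iff'] at hx
  obtain ⟨φ, hφ, hmono⟩ := strictMono_subseq_of_tendsto_atTop hx.1
  exact ⟨_, hmono, _, hx.2.comp hφ.tendsto_atTop, fun j => hP (φ j)⟩

namespace Complex

theorem equicontinuousAt_of_norm_le {ι : Type*} {U : Set ℂ} (hU : IsOpen U)
    {g : ι → ℂ → ℂ} {M : ℝ} (hd : ∀ i, DifferentiableOn ℂ (g i) U)
    (hb : ∀ i, ∀ z ∈ U, ‖g i z‖ ≤ M) {x : ℂ} (hx : x ∈ U) : EquicontinuousAt g x := by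
  obtain ⟨r, hr, hrU⟩ := Metric.isOpen_iff.1 hU x hx
  have hsub : ∀ z ∈ ball x (r / 2), ball z (r / 2) ⊆ U := fun z hz =>
    (ball_subset_ball' (by linarith [mem_ball.1 hz])).trans hrU
  have hderiv : ∀ i, ∀ z ∈ ball x (r / 2), ‖deriv (g i) z‖ ≤ 2 * M / (r / 2) := by
    intro i z hz
    refine norm_deriv_le_div_of_mapsTo_ball ((hd i).mono (hsub z hz)) (fun w hw => ?_)
      (by positivity)
    have hw := hb i w (hsub z hz hw)
    have hz' := hb i z (hrU (ball_subset_ball (by linarith) hz))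
    rw [mem_closedBall, dist_eq_norm]
    linarith [norm_sub_le (g i w) (g i z)]
  have hlim : Tendsto (fun y => dist x y) (𝓝 x) (𝓝 0) := by
    simpa using (continuous_const.dist continuous_id : Continuous fun y : ℂ => dist x y).tendsto x
  refine equicontinuousAt_of_continuity_modulus _
    (by simpa using hlim.const_mul (2 * M / (r / 2))) g ?_
  filter_upwards [ball_mem_nhds x (half_pos hr)] with y hy i
  rw [dist_comm, dist_comm x, dist_eq_norm, dist_eq_norm]
  refine (convex_ball x (r / 2)).norm_image_sub_le_of_norm_deriv_le (fun z hz => ?_) (hderiv i)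
    (mem_ball_self (half_pos hr)) hy
  exact (hd i).differentiableAt (hU.mem_nhds (hrU (ball_subset_ball (by linarith) hz)))

/-- Montel's theorem, via Arzelà–Ascoli in `C(U, ℂ)`. -/
theorem exists_subseq_tendstoLocallyUniformlyOn {U : Set ℂ} (hU : IsOpen U)
    {g : ℕ → ℂ → ℂ} {M : ℝ} (hd : ∀ j, DifferentiableOn ℂ (g j) U)
    (hb : ∀ j, ∀ z ∈ U, ‖g j z‖ ≤ M) :
    ∃ φ : ℕ → ℕ, StrictMono φ ∧ ∃ f : ℂ → ℂ,
      TendstoLocallyUniformlyOn (fun j => g (φ j)) f atTop U := by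
  classical
  have := hU.locallyCompactSpace
  let G : ℕ → C(U, ℂ) := fun j => ⟨U.domRestrict (g j), (hd j).continuousOn.domRestrict⟩
  have hGeq (x : U) : EquicontinuousAt (fun j => ⇑(G j)) x :=
    (equicontinuousAt_restrict_iff g x).2
      ((equicontinuousAt_of_norm_le hU hd hb x.2).equicontinuousWithinAt U)
  have hG : IsCompact (closure (range G)) := by
    refine ArzelaAscoli.isCompact_closure_of_isClosedEmbedding (𝔖 := {K | IsCompact K})
      (fun K hK => hK) ⟨ContinuousMap.isUniformEmbedding_toUniformOnFunIsCompact.isEmbedding, ?_⟩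
      (fun K _ x _ => ?_) (fun K _ x _ => ⟨closedBall 0 M, isCompact_closedBall _ _, ?_⟩)
    · exact (ContinuousMap.range_toUniformOnFunIsCompact (α := U) (β := ℂ)) ▸
        UniformOnFun.isClosed_setOfPred_continuous CompactlyCoherentSpace.isCoherentWith
    · refine EquicontinuousAt.equicontinuousWithinAt (fun (V : Set (ℂ × ℂ)) hV => ?_) K
      filter_upwards [hGeq x V hV] with y hy
      rintro ⟨_, j, rfl⟩
      exact hy j
    · rintro _ ⟨j, rfl⟩
      exact mem_closedBall_zero_iff.2 (hb j x x.2)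
  obtain ⟨F, -, φ, hφ, hlim⟩ := hG.tendsto_subseq fun j => subset_closure (mem_range_self j)
  refine ⟨φ, hφ, fun z => if h : z ∈ U then F ⟨z, h⟩ else 0, ?_⟩
  rw [tendstoLocallyUniformlyOn_iff_tendstoLocallyUniformly_comp_coe]
  convert ContinuousMap.tendsto_iff_tendstoLocallyUniformly.1 hlim using 1
  · rfl
  · funext z
    simp

theorem frequently_ne_of_deriv_ne_zero {U : Set ℂ} (hU : IsOpen U) (hUc : IsPreconnected U)
    {f : ℂ → ℂ} (hf : DifferentiableOn ℂ f U) {x : ℂ} (hx : x ∈ U) (hfx : deriv f x ≠ 0)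
    {z₀ : ℂ} (hz₀ : z₀ ∈ U) : ∃ᶠ z in 𝓝 z₀, f z ≠ f z₀ := by
  intro hconst
  have hEq := (hf.analyticOnNhd hU).eqOn_of_preconnected_of_eventuallyEq analyticOnNhd_const hUc
    hz₀ (hconst.mono fun _ => not_not.1)
  have hloc : f =ᶠ[𝓝 x] fun _ => f z₀ := mem_of_superset (hU.mem_nhds hx) hEq
  exact hfx (by rw [hloc.deriv_eq, deriv_const])

theorem ball_subset_image_of_le_norm_sub_on_sphere {U : Set ℂ} (hU : IsOpen U)
    (hUc : IsPreconnected U) {g : ℂ → ℂ} (hg : DifferentiableOn ℂ g U) {z₀ : ℂ} {ρ m : ℝ}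
    (hρ : 0 < ρ) (hm : 0 < m) (hρU : closedBall z₀ ρ ⊆ U)
    (hsphere : ∀ z ∈ sphere z₀ ρ, m ≤ ‖g z - g z₀‖) :
    ball (g z₀) (m / 2) ⊆ g '' U := by
  have hz₀ : z₀ ∈ U := hρU (mem_closedBall_self hρ.le)
  have hnc : ∃ᶠ z in 𝓝 z₀, g z ≠ g z₀ := by
    intro hconst
    obtain ⟨z, hz⟩ := (NormedSpace.sphere_nonempty (x := z₀)).2 hρ.le
    have hgz := (hg.analyticOnNhd hU).eqOn_of_preconnected_of_eventuallyEq analyticOnNhd_const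
      hUc hz₀ (hconst.mono fun _ => not_not.1) (hρU (sphere_subset_closedBall hz))
    have h := hsphere z hz
    simp only [hgz, sub_self, norm_zero] at h
    linarith
  have hcl : DiffContOnCl ℂ g (ball z₀ ρ) :=
    (hg.mono (closure_ball z₀ hρ.ne' ▸ hρU)).diffContOnCl
  exact (hcl.ball_subset_image_closedBall hρ hsphere hnc).trans (image_mono hρU)

/-- A form of Hurwitz's theorem. -/
theorem eventually_ball_subset_image_of_tendstoLocallyUniformlyOn {U : Set ℂ} (hU : IsOpen U)
    (hUc : IsPreconnected U) {g : ℕ → ℂ → ℂ} {f : ℂ → ℂ}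
    (hg : ∀ j, DifferentiableOn ℂ (g j) U) (hf : TendstoLocallyUniformlyOn g f atTop U)
    {z₀ : ℂ} (hz₀ : z₀ ∈ U) (hnc : ∃ᶠ z in 𝓝 z₀, f z ≠ f z₀) :
    ∃ ε > 0, ∀ᶠ j in atTop, ball (f z₀) ε ⊆ g j '' U := by
  have hfd : DifferentiableOn ℂ f U := hf.differentiableOn (Eventually.of_forall hg) hU
  obtain ⟨ρ₀, hρ₀, hne⟩ : ∃ ρ₀ > 0, ∀ z ∈ ball z₀ ρ₀ ∩ {z₀}ᶜ, f z ≠ f z₀ := by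
    refine Metric.mem_nhdsWithin_iff.1 ?_
    exact ((hfd.analyticAt (hU.mem_nhds hz₀)).eventually_eq_or_eventually_ne
      analyticAt_const).resolve_left fun h => hnc (h.mono fun _ hz => not_not.2 hz)
  obtain ⟨ρ₁, hρ₁, hρ₁U⟩ := Metric.isOpen_iff.1 hU z₀ hz₀
  set ρ := min ρ₀ ρ₁ / 2 with hρ_def
  have hρ : 0 < ρ := by positivity
  have hρU : closedBall z₀ ρ ⊆ U :=
    (closedBall_subset_ball (by linarith [min_le_right ρ₀ ρ₁])).trans hρ₁U
  have hcont : ContinuousOn (fun z => ‖f z - f z₀‖) (sphere z₀ ρ) :=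
    ((hfd.continuousOn.mono (sphere_subset_closedBall.trans hρU)).sub continuousOn_const).norm
  obtain ⟨w, hw, hwmin⟩ := (isCompact_sphere z₀ ρ).exists_isMinOn
    ((NormedSpace.sphere_nonempty (x := z₀)).2 hρ.le) hcont
  set m := ‖f w - f z₀‖
  have hm : 0 < m := by
    refine norm_pos_iff.2 (sub_ne_zero.2 (hne w ⟨?_, ?_⟩))
    · rw [mem_ball, mem_sphere.1 hw]; linarith [min_le_left ρ₀ ρ₁]
    · rintro rfl; simp [hρ.ne] at hw
  -- Once `g j` is `m / 8`-close to `f` on the closed disc, `‖g j - g j z₀‖ ≥ m / 2` on the circle.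
  have hclose : ∀ᶠ j in atTop, ∀ z ∈ closedBall z₀ ρ, dist (f z) (g j z) < m / 8 :=
    Metric.tendstoUniformlyOn_iff.1 ((tendstoLocallyUniformlyOn_iff_forall_isCompact hU).1 hf _
      hρU (isCompact_closedBall _ _)) _ (by positivity)
  refine ⟨m / 8, by positivity, hclose.mono fun j hj => ?_⟩
  have hz₀j := hj z₀ (mem_closedBall_self hρ.le)
  refine (ball_subset_ball' ?_).trans (ball_subset_image_of_le_norm_sub_on_sphere hU hUc (hg j)
    (m := m / 2) hρ (by positivity) hρU fun z hz => ?_)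
  · linarith
  · have hzj := hj z (sphere_subset_closedBall hz)
    have hmz : m ≤ ‖f z - f z₀‖ := hwmin hz
    rw [dist_eq_norm] at hzj hz₀j
    linarith [norm_sub_le_norm_sub_add_norm_sub (f z) (g j z) (f z₀),
      norm_sub_le_norm_sub_add_norm_sub (g j z) (g j z₀) (f z₀), norm_sub_rev (g j z₀) (f z₀)]

end Complex

theorem mapsTo_seqKernel_of_tendstoLocallyUniformlyOn {W : ℕ → Set ℂ} {g : ℕ → ℂ → ℂ}
    {F : ℂ → ℂ} (hg : ∀ j, DifferentiableOn ℂ (g j) (ball 0 1))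
    (hgW : ∀ j, MapsTo (g j) (ball 0 1) (W j))
    (hF : TendstoLocallyUniformlyOn g F atTop (ball 0 1)) (hF' : deriv F 0 ≠ 0)
    (hF0 : F 0 ∈ seqKernel W) : MapsTo F (ball 0 1) (seqKernel W) := by
  have hFd : DifferentiableOn ℂ F (ball 0 1) :=
    hF.differentiableOn (Eventually.of_forall hg) isOpen_ball
  intro z hz
  have hdisc : closedBall (0 : ℂ) ‖z‖ ⊆ ball 0 1 :=
    closedBall_subset_ball (mem_ball_zero_iff.1 hz)
  have hFc : ContinuousOn F (closedBall 0 ‖z‖) := hFd.continuousOn.mono hdisc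
  have htail : ∀ w ∈ F '' closedBall 0 ‖z‖, ∃ n, w ∈ tailInterior W n := by
    rintro _ ⟨z', hz', rfl⟩
    obtain ⟨ε, hε, hball⟩ := Complex.eventually_ball_subset_image_of_tendstoLocallyUniformlyOn
      isOpen_ball (convex_ball 0 1).isPreconnected hg hF (hdisc hz')
      (Complex.frequently_ne_of_deriv_ne_zero isOpen_ball (convex_ball 0 1).isPreconnected hFd
        (mem_ball_self one_pos) hF' (hdisc hz'))
    exact exists_mem_tailInterior (ball_mem_nhds _ hε)
      (hball.mono fun j hj => hj.trans (hgW j).image_subset)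
  obtain ⟨n, hn⟩ :=
    ((isCompact_closedBall 0 ‖z‖).image_of_continuousOn hFc).exists_subset_tailInterior htail
  exact subset_seqKernel_of_isPreconnected
    ((convex_closedBall 0 ‖z‖).isPreconnected.image F hFc)
    (mem_image_of_mem F (mem_closedBall_self (norm_nonneg z))) hF0 hn
    (mem_image_of_mem F (mem_closedBall_zero_iff.2 le_rfl))

section Eta

variable {Ω : Set ℂ} {p : ℂ} {f : ℂ → ℂ}

theorem eta_nonneg (Ω : Set ℂ) (p : ℂ) : 0 ≤ eta Ω p :=
  Real.sSup_nonneg fun _ ⟨_, _, _, _, hr⟩ => hr ▸ norm_nonneg _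

theorem mem_of_eta_pos (h : 0 < eta Ω p) : p ∈ Ω := by
  by_contra hp
  refine h.not_ge (Real.sSup_nonpos fun _ ⟨f, _, hf0, hfΩ, _⟩ => ?_)
  exact (hp (hf0 ▸ hfΩ 0 (mem_ball_self one_pos))).elim

theorem norm_deriv_le_eta (hΩ : Bornology.IsBounded Ω)
    (hf : DifferentiableOn ℂ f (ball 0 1)) (hfΩ : MapsTo f (ball 0 1) Ω) :
    ‖deriv f 0‖ ≤ eta Ω (f 0) := by
  obtain ⟨M, hM⟩ := hΩ.subset_closedBall 0
  refine le_csSup ⟨2 * M, ?_⟩ ⟨f, hf, rfl, hfΩ, rfl⟩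
  rintro _ ⟨g, hg, -, hgΩ, rfl⟩
  have hmaps : MapsTo g (ball 0 1) (closedBall (g 0) (2 * M)) := fun z hz => by
    have hz' := mem_closedBall_zero_iff.1 (hM (hgΩ z hz))
    have h0 := mem_closedBall_zero_iff.1 (hM (hgΩ 0 (mem_ball_self one_pos)))
    rw [mem_closedBall, dist_eq_norm]
    linarith [norm_sub_le (g z) (g 0)]
  simpa using Complex.norm_deriv_le_div_of_mapsTo_ball hg hmaps one_pos

theorem exists_lt_norm_deriv_of_lt_eta (hp : p ∈ Ω) {r : ℝ} (hr : r < eta Ω p) :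
    ∃ f : ℂ → ℂ, DifferentiableOn ℂ f (ball 0 1) ∧ MapsTo f (ball 0 1) Ω ∧ f 0 = p ∧
      r < ‖deriv f 0‖ := by
  obtain ⟨_, ⟨f, hf, hf0, hfΩ, rfl⟩, hrf⟩ := exists_lt_of_lt_csSup
    (by exact ⟨0, fun _ => p, differentiableOn_const p, rfl, fun _ _ => hp, by simp⟩) hr
  exact ⟨f, hf, hfΩ, hf0, hrf⟩

/-- The competitor here is `z ↦ f (r * z) + v`. -/
theorem mul_norm_deriv_le_eta_add (hΩ : Bornology.IsBounded Ω)
    (hf : DifferentiableOn ℂ f (ball 0 1)) {r : ℝ} (hr₀ : 0 < r) (hr₁ : r < 1) {v : ℂ}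
    (hfΩ : ∀ z ∈ closedBall 0 r, f z + v ∈ Ω) : r * ‖deriv f 0‖ ≤ eta Ω (f 0 + v) := by
  have hscale : MapsTo (fun z : ℂ => (r : ℂ) * z) (ball 0 1) (closedBall 0 r) := fun z hz => by
    rw [mem_closedBall_zero_iff, norm_mul, Complex.norm_of_nonneg hr₀.le]
    exact mul_le_of_le_one_right hr₀.le (mem_ball_zero_iff.1 hz).le
  have hdisc : MapsTo (fun z : ℂ => (r : ℂ) * z) (ball 0 1) (ball 0 1) :=
    hscale.mono_right (closedBall_subset_ball hr₁)
  have hderiv : HasDerivAt (fun z => f (r * z) + v) (deriv f 0 * r) 0 := by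
    have hf0 : HasDerivAt f (deriv f 0) ((r : ℂ) * 0) := by
      rw [mul_zero]
      exact (hf.differentiableAt (isOpen_ball.mem_nhds (mem_ball_self one_pos))).hasDerivAt
    simpa using (hf0.comp 0 ((hasDerivAt_id 0).const_mul (r : ℂ))).add_const v
  have := norm_deriv_le_eta (f := fun z => f (r * z) + v) hΩ
    ((hf.comp (differentiableOn_id.const_mul _) hdisc).add_const v) fun z hz => hfΩ _ (hscale hz)
  rw [hderiv.deriv] at this
  simpa only [norm_mul, Complex.norm_of_nonneg hr₀.le, mul_zero, mul_comm] using this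

theorem eventually_lt_eta_of_lt_eta_seqKernel {W : ℕ → Set ℂ}
    (hW : ∀ n, Bornology.IsBounded (W n)) (hp : p ∈ seqKernel W) {c : ℝ}
    (hc : c < eta (seqKernel W) p) : ∀ᶠ x in atTop ×ˢ 𝓝 p, c < eta (W x.1) x.2 := by
  obtain ⟨f, hf, hfW, hf0, hcf⟩ := exists_lt_norm_deriv_of_lt_eta hp hc
  obtain ⟨r, hcr, hr₀, hr₁⟩ : ∃ r : ℝ, c < r * ‖deriv f 0‖ ∧ 0 < r ∧ r < 1 := by
    have hlim : Tendsto (fun r : ℝ => r * ‖deriv f 0‖) (𝓝[<] 1) (𝓝 ‖deriv f 0‖) := by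
      simpa using ((continuous_mul_const ‖deriv f 0‖).tendsto 1).mono_left nhdsWithin_le_nhds
    exact ((hlim.eventually (lt_mem_nhds hcf)).and (Ioo_mem_nhdsLT one_pos)).exists
  have hdisc : closedBall (0 : ℂ) r ⊆ ball 0 1 := closedBall_subset_ball hr₁
  have hC : IsCompact (f '' closedBall 0 r) :=
    (isCompact_closedBall 0 r).image_of_continuousOn (hf.continuousOn.mono hdisc)
  obtain ⟨δ, hδ, hδW⟩ := hC.exists_cthickening_subset_open isOpen_seqKernel
    ((image_mono hdisc).trans hfW.image_subset)
  refine ((hC.cthickening.eventually_subset_of_subset_seqKernel_s10 hδW).prod_mk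
    (ball_mem_nhds p hδ)).mono fun x ⟨hxW, hxp⟩ => ?_
  have hmaps : ∀ z ∈ closedBall 0 r, f z + (x.2 - p) ∈ W x.1 := fun z hz =>
    hxW (mem_cthickening_of_dist_le _ (f z) δ _ (mem_image_of_mem f hz)
      (by simpa [dist_eq_norm] using (mem_ball.1 hxp).le))
  have := mul_norm_deriv_le_eta_add (hW x.1) hf hr₀ hr₁ hmaps
  rw [hf0, add_sub_cancel] at this
  exact hcr.trans_le this

theorem eventually_eta_lt_of_eta_lt {W : ℕ → Set ℂ} {W₀ : Set ℂ} {M : ℝ}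
    (hWM : ∀ n, W n ⊆ closedBall 0 M) (hW₀ : Bornology.IsBounded W₀)
    (hsub : ∀ σ : ℕ → ℕ, StrictMono σ → seqKernel (fun k => W (σ k)) = W₀)
    (hp : p ∈ W₀) {c : ℝ} (hc : eta W₀ p < c) :
    ∀ᶠ x in atTop ×ˢ 𝓝 p, eta (W x.1) x.2 < c := by
  by_contra h
  obtain ⟨n, hn, q, hq, hcq⟩ := exists_seq_of_frequently_atTop_prod_nhds
    (P := fun n q => c ≤ eta (W n) q) (not_eventually.1 h |>.mono fun _ hx => not_lt.1 hx)
  obtain ⟨c', hc', hc'c⟩ := exists_between hc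
  have hc'0 : 0 < c' := (eta_nonneg W₀ p).trans_lt hc'
  have hlt : ∀ j, c' < eta (W (n j)) (q j) := fun j => hc'c.trans_le (hcq j)
  choose f hf hfW hf0 hfc' using fun j =>
    exists_lt_norm_deriv_of_lt_eta (mem_of_eta_pos (hc'0.trans (hlt j))) (hlt j)
  obtain ⟨τ, hτ, F, hfF⟩ := Complex.exists_subseq_tendstoLocallyUniformlyOn isOpen_ball (M := M)
    (fun j => hf j) fun j z hz => mem_closedBall_zero_iff.1 (hWM _ (hfW j hz))
  have h0 : (0 : ℂ) ∈ ball 0 1 := mem_ball_self one_pos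
  have hF0 : F 0 = p := tendsto_nhds_unique (hfF.tendsto_at h0)
    (by simp only [hf0]; exact hq.comp hτ.tendsto_atTop)
  have hFd : DifferentiableOn ℂ F (ball 0 1) :=
    hfF.differentiableOn (Eventually.of_forall fun j => hf (τ j)) isOpen_ball
  have hc'F : c' ≤ ‖deriv F 0‖ :=
    ge_of_tendsto (((hfF.deriv (Eventually.of_forall fun j => hf (τ j)) isOpen_ball).tendsto_at
      h0).norm) (Eventually.of_forall fun j => (hfc' (τ j)).le)
  have hFW₀ : MapsTo F (ball 0 1) W₀ := by
    have hker := hsub (n ∘ τ) (hn.comp hτ)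
    rw [← hker]
    refine mapsTo_seqKernel_of_tendstoLocallyUniformlyOn (fun j => hf (τ j))
      (fun j => hfW (τ j)) hfF (fun h => ?_) (by rw [hker, hF0]; exact hp)
    rw [h, norm_zero] at hc'F
    linarith
  have := norm_deriv_le_eta hW₀ hFd hFW₀
  rw [hF0] at this
  linarith

theorem tendstoLocallyUniformlyOn_eta {W : ℕ → Set ℂ} {W₀ : Set ℂ} {M : ℝ}
    (hWM : ∀ n, W n ⊆ closedBall 0 M) (hW₀ : Bornology.IsBounded W₀)
    (hker : seqKernel W = W₀)
    (hsub : ∀ σ : ℕ → ℕ, StrictMono σ → seqKernel (fun k => W (σ k)) = W₀)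
    (hcont : ContinuousOn (eta W₀) W₀) :
    TendstoLocallyUniformlyOn (fun n => eta (W n)) (eta W₀) atTop W₀ := by
  rw [tendstoLocallyUniformlyOn_iff_forall_tendsto]
  intro p hp
  rw [Metric.uniformity_basis_dist.tendsto_right_iff]
  intro ε hε
  have hprod : (atTop : Filter ℕ) ×ˢ 𝓝[W₀] p ≤ atTop ×ˢ 𝓝 p :=
    prod_mono le_rfl nhdsWithin_le_nhds
  have hlower : ∀ᶠ x in (atTop : Filter ℕ) ×ˢ 𝓝[W₀] p,
      eta W₀ p - ε / 2 < eta (W x.1) x.2 := by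
    subst hker
    exact (eventually_lt_eta_of_lt_eta_seqKernel
      (fun n => isBounded_closedBall.subset (hWM n)) hp (by linarith)).filter_mono hprod
  have hupper : ∀ᶠ x in (atTop : Filter ℕ) ×ˢ 𝓝[W₀] p,
      eta (W x.1) x.2 < eta W₀ p + ε / 2 :=
    (eventually_eta_lt_of_eta_lt hWM hW₀ hsub hp (by linarith)).filter_mono hprod
  have hnear : ∀ᶠ x in (atTop : Filter ℕ) ×ˢ 𝓝[W₀] p,
      dist (eta W₀ x.2) (eta W₀ p) < ε / 2 :=
    tendsto_snd.eventually ((hcont p hp).tendsto.eventually (ball_mem_nhds _ (half_pos hε)))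
  filter_upwards [hlower, hupper, hnear] with x h₁ h₂ h₃
  rw [Real.dist_eq, abs_lt] at h₃ ⊢
  constructor <;> linarith

end Eta

theorem eta_uniform_convergence_of_kernel_convergence_general
    (U : Set ℂ)
    (hUbdd : Bornology.IsBounded U)
    (W : ℕ → Set ℂ) (W₀ : Set ℂ)
    (hWU : ∀ n, W n ⊆ U)
    (hW₀U : W₀ ⊆ U)
    (hker : seqKernel W = W₀)
    (hsub : ∀ σ : ℕ → ℕ, StrictMono σ → seqKernel (fun k => W (σ k)) = W₀)
    (hcont : ContinuousOn (eta W₀) W₀) :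
    ∀ K : Set ℂ, IsCompact K → K ⊆ W₀ →
      TendstoUniformlyOn (fun n p => eta (W n) p) (fun p => eta W₀ p) atTop K := by
  intro K hK hKW₀
  obtain ⟨M, hM⟩ := hUbdd.subset_closedBall 0
  exact (tendstoLocallyUniformlyOn_iff_tendstoUniformlyOn_of_compact hK).1
    ((tendstoLocallyUniformlyOn_eta (fun n => (hWU n).trans hM) (hUbdd.subset hW₀U) hker hsub
      hcont).mono hKW₀)

/-- Theorem 1.6 for the trivial single-leaf foliation of a bounded plane domain
`U`: if `(W n)` converges to `W₀` in the kernel sense, `F = ∅`,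
and `η_{W₀}` is continuous on `W₀`, then `η_{W n} → η_{W₀}` uniformly on every
compact subset of `W₀`. -/
theorem eta_uniform_convergence_of_kernel_convergence
    (U : Set ℂ) (hUopen : IsOpen U) (hUconn : IsConnected U)
    (hUbdd : Bornology.IsBounded U)
    (W : ℕ → Set ℂ) (W₀ : Set ℂ)
    (hWopen : ∀ n, IsOpen (W n)) (hWconn : ∀ n, IsConnected (W n))
    (hWU : ∀ n, W n ⊆ U) (h0 : ∀ n, (0 : ℂ) ∈ W n)
    (hW₀open : IsOpen W₀) (hW₀conn : IsConnected W₀) (hW₀U : W₀ ⊆ U)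
    (h0W₀ : (0 : ℂ) ∈ W₀)
    (hker : seqKernel W = W₀)
    (hsub : ∀ σ : ℕ → ℕ, StrictMono σ → seqKernel (fun k => W (σ k)) = W₀)
    (hF : Fset W W₀ = ∅)
    (hcont : ContinuousOn (eta W₀) W₀) :
    ∀ K : Set ℂ, IsCompact K → K ⊆ W₀ →
      TendstoUniformlyOn (fun n p => eta (W n) p) (fun p => eta W₀ p) atTop K :=
  eta_uniform_convergence_of_kernel_convergence_general U hUbdd W W₀ hWU hW₀U hker hsub hcont
end
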